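/- With the transported shuffle product ш and coefficient function C as above, for positive integers k ≥ 2 and n ≥ k+1: ∑_{r ≥ 1, s1 ≥ 2, s2,...,s_{k-1} ≥ 1, r+s1+...+s_{k-1}=n} z_r ш z_{s1,...,s_{k-1}} = ∑_{ti ≥ 1, ∑ti = n} [C(t1,...,t_{k-1}) − C(t2,...,t_{k-1})] z_{t1,...,tk} − ∑_{ti ≥ 1, t2 = 1, ∑ti = n} z_{t1,...,tk}, with the convention C(∅) = 1 when k = 2. -/

import Mathlib

open Finsupp

/-- The free ℤ-module on words in the two letters `x₀, x₁`
(`false` plays the role of `x₀` and `true` the role of `x₁`). -/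
abbrev XWords : Type := (List Bool) →₀ ℤ

/-- The free ℤ-module on words `z_{s₁,…,s_k}` (a word is the list of its indices). -/
abbrev QWords : Type := (List ℕ) →₀ ℤ

/-- A word in `x₀, x₁` as a basis element. -/
noncomputable def xw (l : List Bool) : XWords := Finsupp.single l 1

/-- The word `z_{s₁,…,s_k}` as a basis element. -/
noncomputable def zw (l : List ℕ) : QWords := Finsupp.single l 1

/-- The bijection `z_{s₁,…,s_k} ↔ x₀^{s₁-1} x₁ ⋯ x₀^{s_k-1} x₁` on words. -/
def encodeWord : List ℕ → List Bool
  | [] => []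
  | s :: t => List.replicate (s - 1) false ++ true :: encodeWord t

/-- The coefficient `C(t₁,…,t_m) = ∑_{j=1}^{m} 2^{(t₁+⋯+t_j)-j} + 2^{(t₁+⋯+t_m)-m}`,
with `C` of the empty tuple equal to `1`. -/
def Ccoef (t : List ℕ) : ℤ :=
  (∑ j ∈ Finset.range t.length, 2 ^ ((t.take (j + 1)).sum - (j + 1)))
    + 2 ^ (t.sum - t.length)

/-!
Apply `encodeWord`, which is injective on words with positive entries: there the transported
shuffle becomes the ordinary shuffle of words in `x₀, x₁`. Put
`A(N, m) = ∑ z_r ш z_{s₁,…,s_m}` over `r + s₁ + ⋯ + s_m = N` and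
`R(N, m) = ∑ C(t₁,…,t_m) z_{t₁,…,t_{m+1}}` over compositions of `N` into `m + 1` parts.
Every word of `z_r ш z_s` begins with the first letter of `z_r` or with that of `z_s`; sorting
these words by that letter, and the compositions by whether the part involved equals `1`, gives
`A(N+1, m+1) = x₀(2A(N, m+1)) + x₁(A(N, m) + ∑_{t₁+⋯+t_{m+1} = N} z_t)`.
Since `C(1, u) = 1 + C(u)` and `C(a+1, u) = 2C(a, u)`, `R` satisfies the same recursion, so
`A = R`. The condition `s₁ ≥ 2` is removed by subtracting the part with `s₁ = 1`, and a
first-letter recursion of the same kind evaluates that part as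
`∑ C(t₂,…,t_{m+1}) z_t + ∑_{t₂ = 1} z_t`.
-/

def compositionLists (N m : ℕ) : Finset (List ℕ) :=
  (Finset.univ.filter fun c : Composition N => c.length = m).image Composition.blocks

theorem mem_compositionLists {N m : ℕ} {l : List ℕ} :
    l ∈ compositionLists N m ↔ l.length = m ∧ l.sum = N ∧ ∀ x ∈ l, 1 ≤ x := by
  simp only [compositionLists, Finset.mem_image, Finset.mem_filter, Finset.mem_univ, true_and]
  constructor
  · rintro ⟨c, rfl, rfl⟩
    exact ⟨rfl, c.blocks_sum, fun x hx => c.blocks_pos hx⟩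
  · rintro ⟨rfl, rfl, h⟩
    exact ⟨⟨l, fun hx => h _ hx, rfl⟩, rfl, rfl⟩

theorem compositionLists_eq_empty {N m : ℕ} (h : N < m) : compositionLists N m = ∅ := by
  refine Finset.eq_empty_of_forall_notMem fun l hl => ?_
  obtain ⟨rfl, rfl, hpos⟩ := mem_compositionLists.1 hl
  exact absurd (List.length_le_sum_of_one_le l hpos) (not_le.2 h)

theorem exists_eq_cons_of_mem_compositionLists {N m : ℕ} {l : List ℕ}
    (h : l ∈ compositionLists N (m + 1)) :
    ∃ a t, l = a :: t ∧ 1 ≤ a ∧ t ∈ compositionLists (N - a) m := by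
  obtain ⟨hlen, hsum, hpos⟩ := mem_compositionLists.1 h
  match l, hlen with
  | a :: t, hlen =>
    simp only [List.sum_cons, List.mem_cons, forall_eq_or_imp, List.length_cons] at hsum hpos hlen
    exact ⟨a, t, rfl, hpos.1, mem_compositionLists.2 ⟨by omega, by omega, hpos.2⟩⟩

section Sums

variable {M : Type*} [AddCommMonoid M]

theorem sum_compositions_eq_sum_compositionLists {n k : ℕ} (f : List ℕ → M) :
    ∑ c ∈ Finset.univ.filter (fun c : Composition n => c.length = k), f c.blocks
      = ∑ l ∈ compositionLists n k, f l :=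
  (Finset.sum_image fun _ _ _ _ => Composition.ext).symm

theorem sum_compositions_filter_eq_sum_compositionLists_filter {n k : ℕ}
    (P : List ℕ → Prop) [DecidablePred P] (f : List ℕ → M) :
    ∑ c ∈ Finset.univ.filter (fun c : Composition n => c.length = k ∧ P c.blocks), f c.blocks
      = ∑ l ∈ (compositionLists n k).filter P, f l := by
  rw [compositionLists, Finset.filter_image, Finset.sum_image fun _ _ _ _ => Composition.ext,
    Finset.filter_filter]

theorem sum_compositionLists_succ_succ (N m : ℕ) (f : List ℕ → M) :
    ∑ l ∈ compositionLists (N + 1) (m + 1), f l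
      = ∑ s ∈ compositionLists N m, f (1 :: s)
        + ∑ l ∈ compositionLists N (m + 1), f ((l.headI + 1) :: l.tail) := by
  rw [← Finset.sum_filter_add_sum_filter_not _ (·.headI = 1)]
  congr 1
  · refine Finset.sum_nbij' List.tail (1 :: ·) ?_ ?_ ?_ (fun _ _ => rfl) ?_ <;>
      rintro (_ | ⟨a, t⟩) <;> simp [mem_compositionLists] <;> grind
  · refine Finset.sum_nbij' (fun l => (l.headI - 1) :: l.tail) (fun l => (l.headI + 1) :: l.tail)
      ?_ ?_ ?_ ?_ ?_ <;> rintro (_ | ⟨a, t⟩) <;> simp [mem_compositionLists] <;> grind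

theorem sum_compositionLists_filter_second_eq_one (N m : ℕ) (f : List ℕ → M) :
    ∑ l ∈ (compositionLists (N + 1) (m + 2)).filter (·.tail.headI = 1), f l
      = ∑ l ∈ compositionLists N (m + 1), f (l.headI :: 1 :: l.tail) := by
  refine Finset.sum_nbij' (fun l => l.headI :: l.tail.tail) (fun l => l.headI :: 1 :: l.tail)
    ?_ ?_ ?_ ?_ ?_ <;> rintro (_ | ⟨a, _ | ⟨b, t⟩⟩) <;> simp [mem_compositionLists] <;>
    grind

theorem sum_compositionLists_succ_add_two (N m : ℕ) (f : List ℕ → M) :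
    ∑ l ∈ compositionLists (N + 1) (m + 2), f l
      = ∑ l ∈ compositionLists N (m + 1), f (l.headI :: 1 :: l.tail)
        + ∑ l ∈ compositionLists N (m + 2),
            f (l.headI :: (l.tail.headI + 1) :: l.tail.tail) := by
  rw [← Finset.sum_filter_add_sum_filter_not _ (·.tail.headI = 1),
    sum_compositionLists_filter_second_eq_one]
  congr 1
  refine Finset.sum_nbij' (fun l => l.headI :: (l.tail.headI - 1) :: l.tail.tail)
    (fun l => l.headI :: (l.tail.headI + 1) :: l.tail.tail) ?_ ?_ ?_ ?_ ?_ <;>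
    rintro (_ | ⟨a, _ | ⟨b, t⟩⟩) <;> simp [mem_compositionLists] <;> grind

end Sums

@[simp] theorem encodeWord_nil : encodeWord [] = [] :=
  rfl

@[simp] theorem encodeWord_one_cons (t : List ℕ) : encodeWord (1 :: t) = true :: encodeWord t :=
  rfl

theorem encodeWord_succ_cons {a : ℕ} (ha : 1 ≤ a) (t : List ℕ) :
    encodeWord ((a + 1) :: t) = false :: encodeWord (a :: t) := by
  obtain ⟨b, rfl⟩ := Nat.exists_eq_add_of_le' ha
  simp [encodeWord, List.replicate_succ]

theorem replicate_false_append_true_cons_inj {i j : ℕ} {x y : List Bool}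
    (h : List.replicate i false ++ true :: x = List.replicate j false ++ true :: y) :
    i = j ∧ x = y := by
  induction i generalizing j with
  | zero => cases j <;> simp_all [List.replicate_succ]
  | succ i ih => cases j <;> simp_all [List.replicate_succ]

theorem encodeWord_injOn : Set.InjOn encodeWord {l : List ℕ | ∀ x ∈ l, 1 ≤ x} := by
  intro u hu v hv h
  induction u generalizing v with
  | nil => cases v <;> simp_all [encodeWord]
  | cons a u ih =>
    cases v with
    | nil => simp [encodeWord] at h
    | cons b v =>
      obtain ⟨hab, huv⟩ := replicate_false_append_true_cons_inj h
      simp only [Set.mem_ofPred_eq, List.mem_cons, forall_eq_or_imp] at hu hv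
      rw [ih hu.2 hv.2 huv]
      congr
      omega

noncomputable def shuffle : List Bool → List Bool → XWords
  | [], v => xw v
  | a :: u, [] => xw (a :: u)
  | a :: u, b :: v =>
      mapDomain (List.cons a) (shuffle u (b :: v)) + mapDomain (List.cons b) (shuffle (a :: u) v)
termination_by u v => u.length + v.length

@[simp] theorem shuffle_nil_left (v : List Bool) : shuffle [] v = xw v := by
  cases v <;> rw [shuffle]

@[simp] theorem shuffle_nil_right (u : List Bool) : shuffle u [] = xw u := by
  cases u <;> rw [shuffle]

theorem shuffle_cons_cons (a b : Bool) (u v : List Bool) :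
    shuffle (a :: u) (b :: v)
      = mapDomain (List.cons a) (shuffle u (b :: v))
        + mapDomain (List.cons b) (shuffle (a :: u) v) := by
  rw [shuffle]

theorem shuffle_eq_of_ne_nil {u v : List Bool} (hu : u ≠ []) (hv : v ≠ []) :
    shuffle u v = mapDomain (List.cons u.headI) (shuffle u.tail v)
      + mapDomain (List.cons v.headI) (shuffle u v.tail) := by
  obtain ⟨a, u, rfl⟩ := List.exists_cons_of_ne_nil hu
  obtain ⟨b, v, rfl⟩ := List.exists_cons_of_ne_nil hv
  exact shuffle_cons_cons a b u v

theorem sh_xw_eq_shuffle (sh : XWords →ₗ[ℤ] XWords →ₗ[ℤ] XWords)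
    (hsunitl : ∀ w : XWords, sh (xw []) w = w)
    (hsunitr : ∀ w : XWords, sh w (xw []) = w)
    (hsrec : ∀ (a b : Bool) (u v : List Bool),
      sh (xw (a :: u)) (xw (b :: v)) =
        mapDomain (List.cons a) (sh (xw u) (xw (b :: v))) +
          mapDomain (List.cons b) (sh (xw (a :: u)) (xw v)))
    (u v : List Bool) : sh (xw u) (xw v) = shuffle u v := by
  induction u generalizing v with
  | nil => rw [hsunitl, shuffle_nil_left]
  | cons a u ihu =>
    induction v with
    | nil => rw [hsunitr, shuffle_nil_right]
    | cons b v ihv => rw [hsrec, ihu, ihv, shuffle_cons_cons]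

noncomputable def zShuffle (r : ℕ) (s : List ℕ) : XWords :=
  shuffle (encodeWord [r]) (encodeWord s)

/-- The words of `z_r ш z_s` that begin with the first letter of `z_r`. -/
noncomputable def zShuffleLeft (r : ℕ) (s : List ℕ) : XWords :=
  mapDomain (List.cons (encodeWord [r]).headI) (shuffle (encodeWord [r]).tail (encodeWord s))

/-- The words of `z_r ш z_s` that begin with the first letter of `z_s`. -/
noncomputable def zShuffleRight (r : ℕ) (s : List ℕ) : XWords :=
  mapDomain (List.cons (encodeWord s).headI) (shuffle (encodeWord [r]) (encodeWord s).tail)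

theorem zShuffle_eq_add {s : List ℕ} (hs : s ≠ []) (r : ℕ) :
    zShuffle r s = zShuffleLeft r s + zShuffleRight r s := by
  obtain ⟨a, t, rfl⟩ := List.exists_cons_of_ne_nil hs
  exact shuffle_eq_of_ne_nil (by simp [encodeWord]) (by simp [encodeWord])

theorem zShuffleLeft_one (s : List ℕ) :
    zShuffleLeft 1 s = mapDomain (List.cons true) (xw (encodeWord s)) := by
  simp [zShuffleLeft]

theorem zShuffleLeft_succ {a : ℕ} (ha : 1 ≤ a) (s : List ℕ) :
    zShuffleLeft (a + 1) s = mapDomain (List.cons false) (zShuffle a s) := by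
  simp [zShuffleLeft, zShuffle, encodeWord_succ_cons ha]

theorem zShuffleRight_one_cons (r : ℕ) (t : List ℕ) :
    zShuffleRight r (1 :: t) = mapDomain (List.cons true) (zShuffle r t) := by
  simp [zShuffleRight, zShuffle]

theorem zShuffleRight_succ_cons (r : ℕ) {b : ℕ} (hb : 1 ≤ b) (t : List ℕ) :
    zShuffleRight r ((b + 1) :: t) = mapDomain (List.cons false) (zShuffle r (b :: t)) := by
  simp [zShuffleRight, zShuffle, encodeWord_succ_cons hb]

theorem mapDomain_cons_xw (a : Bool) (w : List Bool) :
    mapDomain (List.cons a) (xw w) = xw (a :: w) :=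
  mapDomain_single

theorem xw_encodeWord_one_cons (t : List ℕ) :
    xw (encodeWord (1 :: t)) = mapDomain (List.cons true) (xw (encodeWord t)) := by
  rw [encodeWord_one_cons, mapDomain_cons_xw]

theorem xw_encodeWord_succ_cons {a : ℕ} (ha : 1 ≤ a) (t : List ℕ) :
    xw (encodeWord ((a + 1) :: t)) = mapDomain (List.cons false) (xw (encodeWord (a :: t))) := by
  rw [encodeWord_succ_cons ha, mapDomain_cons_xw]

@[simp] theorem Ccoef_nil : Ccoef [] = 1 := by
  simp [Ccoef]

theorem Ccoef_one_cons (u : List ℕ) : Ccoef (1 :: u) = 1 + Ccoef u := by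
  simp only [Ccoef, List.length_cons, Finset.sum_range_succ', List.take_succ_cons, List.sum_cons,
    List.take_zero, List.sum_nil]
  have hexp : ∀ j, 1 + (u.take (j + 1)).sum - (j + 1 + 1) = (u.take (j + 1)).sum - (j + 1) := by
    omega
  simp only [hexp, show 1 + u.sum - (u.length + 1) = u.sum - u.length by omega]
  ring

theorem Ccoef_succ_cons {a : ℕ} (ha : 1 ≤ a) {u : List ℕ} (hu : ∀ x ∈ u, 1 ≤ x) :
    Ccoef ((a + 1) :: u) = 2 * Ccoef (a :: u) := by
  have htake : ∀ j, j ≤ u.length → j ≤ (u.take j).sum := fun j hj => by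
    simpa [hj] using
      List.length_le_sum_of_one_le (u.take j) fun x hx => hu x (List.mem_of_mem_take hx)
  simp only [Ccoef, mul_add, Finset.mul_sum, List.length_cons, List.take_succ_cons, List.sum_cons]
  congr 1
  · refine Finset.sum_congr rfl fun j hj => ?_
    have := htake j (by simpa [Nat.lt_succ_iff] using hj)
    rw [show a + 1 + (u.take j).sum - (j + 1) = a + (u.take j).sum - (j + 1) + 1 by omega,
      pow_succ]
    ring
  · have := htake u.length le_rfl
    rw [List.take_length] at this
    rw [show a + 1 + u.sum - (u.length + 1) = a + u.sum - (u.length + 1) + 1 by omega, pow_succ]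
    ring

noncomputable def wordSum (N m : ℕ) : XWords :=
  ∑ l ∈ compositionLists N m, xw (encodeWord l)

noncomputable def shuffleSum (N m : ℕ) : XWords :=
  ∑ l ∈ compositionLists N (m + 1), zShuffle l.headI l.tail

noncomputable def coefSum (N m : ℕ) : XWords :=
  ∑ l ∈ compositionLists N (m + 1), Ccoef (l.take m) • xw (encodeWord l)

theorem sum_zShuffleLeft (g : List ℕ → List ℕ) (N m : ℕ) :
    ∑ l ∈ compositionLists (N + 1) (m + 1), zShuffleLeft l.headI (g l.tail)
      = mapDomain (List.cons true) (∑ s ∈ compositionLists N m, xw (encodeWord (g s)))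
        + mapDomain (List.cons false)
            (∑ l ∈ compositionLists N (m + 1), zShuffle l.headI (g l.tail)) := by
  rw [sum_compositionLists_succ_succ, mapDomain_finsetSum, mapDomain_finsetSum]
  congr 1
  · exact Finset.sum_congr rfl fun s _ => zShuffleLeft_one _
  · refine Finset.sum_congr rfl fun l hl => ?_
    obtain ⟨a, t, rfl, ha, -⟩ := exists_eq_cons_of_mem_compositionLists hl
    exact zShuffleLeft_succ ha _

theorem sum_zShuffleRight (N m : ℕ) :
    ∑ l ∈ compositionLists (N + 1) (m + 2), zShuffleRight l.headI l.tail
      = mapDomain (List.cons true) (shuffleSum N m)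
        + mapDomain (List.cons false) (shuffleSum N (m + 1)) := by
  rw [sum_compositionLists_succ_add_two, shuffleSum, shuffleSum, mapDomain_finsetSum,
    mapDomain_finsetSum]
  refine congrArg₂ (· + ·) (Finset.sum_congr rfl fun l _ => zShuffleRight_one_cons _ _)
    (Finset.sum_congr rfl fun l hl => ?_)
  obtain ⟨a, t, rfl, -, ht⟩ := exists_eq_cons_of_mem_compositionLists hl
  obtain ⟨b, t, rfl, hb, -⟩ := exists_eq_cons_of_mem_compositionLists ht
  exact zShuffleRight_succ_cons _ hb _

theorem shuffleSum_succ_succ (N m : ℕ) :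
    shuffleSum (N + 1) (m + 1)
      = mapDomain (List.cons false) (shuffleSum N (m + 1) + shuffleSum N (m + 1))
        + mapDomain (List.cons true) (shuffleSum N m + wordSum N (m + 1)) := by
  have hsplit : ∀ l ∈ compositionLists (N + 1) (m + 2),
      zShuffle l.headI l.tail = zShuffleLeft l.headI l.tail + zShuffleRight l.headI l.tail := by
    intro l hl
    obtain ⟨a, t, rfl, -, ht⟩ := exists_eq_cons_of_mem_compositionLists hl
    obtain ⟨b, t, rfl, -⟩ := exists_eq_cons_of_mem_compositionLists ht
    exact zShuffle_eq_add (List.cons_ne_nil b t) a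
  rw [shuffleSum, Finset.sum_congr rfl hsplit, Finset.sum_add_distrib,
    sum_zShuffleLeft (fun t => t) N (m + 1), sum_zShuffleRight]
  simp only [mapDomain_add, shuffleSum, wordSum]
  abel

theorem coefSum_succ_succ (N m : ℕ) :
    coefSum (N + 1) (m + 1)
      = mapDomain (List.cons false) (coefSum N (m + 1) + coefSum N (m + 1))
        + mapDomain (List.cons true) (coefSum N m + wordSum N (m + 1)) := by
  have hsucc : ∀ l ∈ compositionLists N (m + 2),
      Ccoef (((l.headI + 1) :: l.tail).take (m + 1)) • xw (encodeWord ((l.headI + 1) :: l.tail))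
        = mapDomain (List.cons false) (Ccoef (l.take (m + 1)) • xw (encodeWord l)
            + Ccoef (l.take (m + 1)) • xw (encodeWord l)) := by
    intro l hl
    obtain ⟨a, t, rfl, ha, ht⟩ := exists_eq_cons_of_mem_compositionLists hl
    have hpos : ∀ x ∈ t.take m, 1 ≤ x :=
      fun x hx => (mem_compositionLists.1 ht).2.2 x (List.mem_of_mem_take hx)
    simp only [List.headI_cons, List.tail_cons, List.take_succ_cons, Ccoef_succ_cons ha hpos,
      xw_encodeWord_succ_cons ha, ← add_smul, ← two_mul, mapDomain_smul]
  rw [coefSum, sum_compositionLists_succ_succ, Finset.sum_congr rfl hsucc]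
  simp only [List.take_succ_cons, Ccoef_one_cons, xw_encodeWord_one_cons, add_smul, one_smul,
    ← mapDomain_smul, mapDomain_add, mapDomain_finsetSum, Finset.sum_add_distrib, coefSum,
    wordSum]
  abel

theorem shuffleSum_eq_coefSum : ∀ N m : ℕ, shuffleSum N m = coefSum N m
  | N, 0 => by
    refine Finset.sum_congr rfl fun l hl => ?_
    obtain ⟨a, t, rfl, -, ht⟩ := exists_eq_cons_of_mem_compositionLists hl
    obtain rfl : t = [] := List.eq_nil_of_length_eq_zero (mem_compositionLists.1 ht).1
    simp [zShuffle]
  | 0, m + 1 => by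
    simp [shuffleSum, coefSum, compositionLists_eq_empty]
  | N + 1, m + 1 => by
    rw [shuffleSum_succ_succ, coefSum_succ_succ, shuffleSum_eq_coefSum N m,
      shuffleSum_eq_coefSum N (m + 1)]

noncomputable def tailCoefSum (N m : ℕ) : XWords :=
  ∑ l ∈ compositionLists N (m + 2), Ccoef (l.tail.take m) • xw (encodeWord l)

noncomputable def secondOneShuffleSum (N m : ℕ) : XWords :=
  ∑ l ∈ compositionLists N (m + 1), zShuffle l.headI (1 :: l.tail)

noncomputable def secondOneWordSum (N m : ℕ) : XWords :=
  ∑ l ∈ compositionLists N (m + 1), xw (encodeWord (l.headI :: 1 :: l.tail))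

theorem tailCoefSum_succ (N m : ℕ) :
    tailCoefSum (N + 1) m
      = mapDomain (List.cons false) (tailCoefSum N m)
        + mapDomain (List.cons true) (coefSum N m) := by
  rw [tailCoefSum, sum_compositionLists_succ_succ, add_comm]
  simp only [tailCoefSum, coefSum, mapDomain_finsetSum]
  refine congrArg₂ (· + ·) (Finset.sum_congr rfl fun l hl => ?_)
    (Finset.sum_congr rfl fun l _ => by
      rw [List.tail_cons, xw_encodeWord_one_cons, mapDomain_smul])
  obtain ⟨a, t, rfl, ha, -⟩ := exists_eq_cons_of_mem_compositionLists hl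
  rw [List.tail_cons, List.tail_cons, List.headI_cons, xw_encodeWord_succ_cons ha, mapDomain_smul]

theorem secondOneWordSum_succ (N m : ℕ) :
    secondOneWordSum (N + 1) m
      = mapDomain (List.cons false) (secondOneWordSum N m)
        + mapDomain (List.cons true)
            (∑ s ∈ compositionLists N m, xw (encodeWord (1 :: s))) := by
  rw [secondOneWordSum, sum_compositionLists_succ_succ, add_comm]
  simp only [secondOneWordSum, mapDomain_finsetSum]
  refine congrArg₂ (· + ·) (Finset.sum_congr rfl fun l hl => ?_)
    (Finset.sum_congr rfl fun s _ => xw_encodeWord_one_cons _)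
  obtain ⟨a, t, rfl, ha, -⟩ := exists_eq_cons_of_mem_compositionLists hl
  exact xw_encodeWord_succ_cons ha _

theorem secondOneShuffleSum_succ (N m : ℕ) :
    secondOneShuffleSum (N + 1) m
      = mapDomain (List.cons false) (secondOneShuffleSum N m)
        + mapDomain (List.cons true)
            (∑ s ∈ compositionLists N m, xw (encodeWord (1 :: s)) + shuffleSum (N + 1) m) := by
  rw [secondOneShuffleSum,
    Finset.sum_congr rfl fun l _ => zShuffle_eq_add (List.cons_ne_nil _ _) _,
    Finset.sum_add_distrib, sum_zShuffleLeft (1 :: ·), shuffleSum, mapDomain_add,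
    mapDomain_finsetSum (s := compositionLists (N + 1) (m + 1))]
  simp only [zShuffleRight_one_cons, secondOneShuffleSum]
  abel

theorem secondOneShuffleSum_eq (N m : ℕ) :
    secondOneShuffleSum N m = tailCoefSum (N + 1) m + secondOneWordSum N m := by
  induction N with
  | zero => simp [secondOneShuffleSum, tailCoefSum, secondOneWordSum, compositionLists_eq_empty]
  | succ N ih =>
    rw [secondOneShuffleSum_succ, tailCoefSum_succ, secondOneWordSum_succ, ih,
      shuffleSum_eq_coefSum]
    simp only [mapDomain_add]
    abel

theorem sum_compositionLists_filter_two_le_second {M : Type*} [AddCommGroup M] (n m : ℕ)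
    (f : List ℕ → M) :
    ∑ l ∈ (compositionLists n (m + 2)).filter (fun l => 2 ≤ l.tail.headI), f l
      = ∑ l ∈ compositionLists n (m + 2), f l
        - ∑ l ∈ (compositionLists n (m + 2)).filter (·.tail.headI = 1), f l := by
  rw [eq_sub_iff_add_eq, add_comm,
    ← Finset.sum_filter_add_sum_filter_not (compositionLists n (m + 2)) (·.tail.headI = 1)]
  refine congrArg _ (Finset.sum_congr (Finset.filter_congr fun l hl => ?_) fun _ _ => rfl)
  obtain ⟨a, t, rfl, -, ht⟩ := exists_eq_cons_of_mem_compositionLists hl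
  obtain ⟨b, t, rfl, hb, -⟩ := exists_eq_cons_of_mem_compositionLists ht
  simp only [List.tail_cons, List.headI_cons]
  omega

theorem sum_compositionLists_filter_second_eq_one_zShuffle (n m : ℕ) :
    ∑ l ∈ (compositionLists n (m + 2)).filter (·.tail.headI = 1), zShuffle l.headI l.tail
      = tailCoefSum n m
        + ∑ l ∈ (compositionLists n (m + 2)).filter (·.tail.headI = 1), xw (encodeWord l) := by
  cases n with
  | zero => simp [tailCoefSum, compositionLists_eq_empty]
  | succ N =>
    rw [sum_compositionLists_filter_second_eq_one, sum_compositionLists_filter_second_eq_one]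
    exact secondOneShuffleSum_eq N m

theorem shuffle_sum_formula_admissible_general
    (sh : XWords →ₗ[ℤ] XWords →ₗ[ℤ] XWords)
    (hsunitl : ∀ w : XWords, sh (xw []) w = w)
    (hsunitr : ∀ w : XWords, sh w (xw []) = w)
    (hsrec : ∀ (a b : Bool) (u v : List Bool),
      sh (xw (a :: u)) (xw (b :: v)) =
        Finsupp.mapDomain (List.cons a) (sh (xw u) (xw (b :: v))) +
          Finsupp.mapDomain (List.cons b) (sh (xw (a :: u)) (xw v)))
    (msh : QWords →ₗ[ℤ] QWords →ₗ[ℤ] QWords)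
    (hsupp : ∀ u v : List ℕ, (∀ x ∈ u, 1 ≤ x) → (∀ x ∈ v, 1 ≤ x) →
      ∀ l ∈ (msh (zw u) (zw v)).support, ∀ x ∈ l, 1 ≤ x)
    (hcompat : ∀ u v : List ℕ, (∀ x ∈ u, 1 ≤ x) → (∀ x ∈ v, 1 ≤ x) →
      Finsupp.mapDomain encodeWord (msh (zw u) (zw v)) =
        sh (xw (encodeWord u)) (xw (encodeWord v)))
    (k n : ℕ) (hk : 2 ≤ k) :
    ∑ c ∈ Finset.univ.filter
        (fun c : Composition n => c.length = k ∧ 2 ≤ c.blocks.tail.headI),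
        msh (zw [c.blocks.headI]) (zw c.blocks.tail)
      = (∑ c ∈ Finset.univ.filter (fun c : Composition n => c.length = k),
          (Ccoef (c.blocks.take (k - 1)) - Ccoef (c.blocks.tail.take (k - 2)))
            • zw c.blocks)
        - ∑ c ∈ Finset.univ.filter
            (fun c : Composition n => c.length = k ∧ c.blocks.tail.headI = 1),
            zw c.blocks := by
  obtain ⟨m, rfl⟩ : ∃ m, k = m + 2 := ⟨k - 2, by omega⟩
  set S := supported ℤ ℤ {l : List ℕ | ∀ x ∈ l, 1 ≤ x}
  have hzw : ∀ l ∈ compositionLists n (m + 2), zw l ∈ S :=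
    fun l hl => single_mem_supported ℤ 1 (mem_compositionLists.1 hl).2.2
  have hmsh : ∀ l ∈ compositionLists n (m + 2), msh (zw [l.headI]) (zw l.tail) ∈ S ∧
      mapDomain encodeWord (msh (zw [l.headI]) (zw l.tail)) = zShuffle l.headI l.tail := by
    intro l hl
    obtain ⟨a, t, rfl, ha, ht⟩ := exists_eq_cons_of_mem_compositionLists hl
    have hpos : ∀ x ∈ [a], 1 ≤ x := by simpa using ha
    have htpos := (mem_compositionLists.1 ht).2.2
    simp only [List.headI_cons, List.tail_cons]
    rw [hcompat _ _ hpos htpos, sh_xw_eq_shuffle sh hsunitl hsunitr hsrec]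
    exact ⟨hsupp _ _ hpos htpos, rfl⟩
  simp only [show m + 2 - 1 = m + 1 from rfl, show m + 2 - 2 = m from rfl]
  rw [sum_compositions_filter_eq_sum_compositionLists_filter (fun l => 2 ≤ l.tail.headI)
      (fun l => msh (zw [l.headI]) (zw l.tail)),
    sum_compositions_eq_sum_compositionLists
      (fun l => (Ccoef (l.take (m + 1)) - Ccoef (l.tail.take m)) • zw l),
    sum_compositions_filter_eq_sum_compositionLists_filter (·.tail.headI = 1) zw]
  refine mapDomain_injOn _ encodeWord_injOn
    (Submodule.sum_mem _ fun l hl => (hmsh l (Finset.mem_of_mem_filter l hl)).1)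
    (sub_mem (Submodule.sum_mem _ fun l hl => Submodule.smul_mem _ _ (hzw l hl))
      (Submodule.sum_mem _ fun l hl => hzw l (Finset.mem_of_mem_filter l hl))) ?_
  rw [mapDomain_finsetSum,
    Finset.sum_congr rfl fun l hl => (hmsh l (Finset.mem_of_mem_filter l hl)).2,
    sum_compositionLists_filter_two_le_second, sum_compositionLists_filter_second_eq_one_zShuffle,
    ← shuffleSum, shuffleSum_eq_coefSum]
  simp only [mapDomain_sub, mapDomain_finsetSum, mapDomain_smul, zw, mapDomain_single, sub_smul,
    Finset.sum_sub_distrib, coefSum, tailCoefSum]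
  abel

/-- Admissible sum formula for the transported shuffle product:
for `k ≥ 2`, `n ≥ k+1`,
`∑_{r≥1, s₁≥2, r+s₁+⋯+s_{k-1}=n} z_r ш z_{s₁,…,s_{k-1}}
  = ∑_{∑tᵢ=n} [C(t₁,…,t_{k-1}) − C(t₂,…,t_{k-1})] z_{t₁,…,t_k}
    − ∑_{∑tᵢ=n, t₂=1} z_{t₁,…,t_k}`, with `C(∅)=1` when `k = 2`. -/
theorem shuffle_sum_formula_admissible
    (sh : XWords →ₗ[ℤ] XWords →ₗ[ℤ] XWords)
    (hsunitl : ∀ w : XWords, sh (xw []) w = w)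
    (hsunitr : ∀ w : XWords, sh w (xw []) = w)
    (hsrec : ∀ (a b : Bool) (u v : List Bool),
      sh (xw (a :: u)) (xw (b :: v)) =
        Finsupp.mapDomain (List.cons a) (sh (xw u) (xw (b :: v))) +
          Finsupp.mapDomain (List.cons b) (sh (xw (a :: u)) (xw v)))
    (msh : QWords →ₗ[ℤ] QWords →ₗ[ℤ] QWords)
    (hsupp : ∀ u v : List ℕ, (∀ x ∈ u, 1 ≤ x) → (∀ x ∈ v, 1 ≤ x) →
      ∀ l ∈ (msh (zw u) (zw v)).support, ∀ x ∈ l, 1 ≤ x)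
    (hcompat : ∀ u v : List ℕ, (∀ x ∈ u, 1 ≤ x) → (∀ x ∈ v, 1 ≤ x) →
      Finsupp.mapDomain encodeWord (msh (zw u) (zw v)) =
        sh (xw (encodeWord u)) (xw (encodeWord v)))
    (k n : ℕ) (hk : 2 ≤ k) (hn : k + 1 ≤ n) :
    ∑ c ∈ Finset.univ.filter
        (fun c : Composition n => c.length = k ∧ 2 ≤ c.blocks.tail.headI),
        msh (zw [c.blocks.headI]) (zw c.blocks.tail)
      = (∑ c ∈ Finset.univ.filter (fun c : Composition n => c.length = k),
          (Ccoef (c.blocks.take (k - 1)) - Ccoef (c.blocks.tail.take (k - 2)))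
            • zw c.blocks)
        - ∑ c ∈ Finset.univ.filter
            (fun c : Composition n => c.length = k ∧ c.blocks.tail.headI = 1),
            zw c.blocks :=
  shuffle_sum_formula_admissible_general sh hsunitl hsunitr hsrec msh hsupp hcompat k n hk
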